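/- Let Γ = (A, Θ, p, c) be an anonymous nonatomic game with incomplete information and let μ be a Bayes correlated Wardrop equilibrium of Γ. Then there exists a sequence ε_n ≥ 0 with ε_n → 0 and, for each n ≥ 1, an ε_n-Bayes correlated equilibrium β^n of the n-player game Γ_n whose induced outcome μ^n satisfies: for every θ ∈ Θ, μ^n(·|θ) converges weak* to μ(·|θ). -/

import Mathlib

open MeasureTheory Filter

def FlowSet (A : Type*) [Fintype A] : Set (A → ℝ) :=
  {y | (∀ a, 0 ≤ y a) ∧ ∑ a, y a = 1}

noncomputable def flowOf {A : Type*} [Fintype A] [DecidableEq A] {n : ℕ}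
    (v : Fin n → A) : A → ℝ :=
  fun a => (∑ i, if v i = a then (1 : ℝ) else 0) / n

lemma flowOf_mem {A : Type*} [Fintype A] [DecidableEq A] {n : ℕ} (hn : 0 < n)
    (v : Fin n → A) : flowOf v ∈ FlowSet A := by
  constructor
  · intro a
    apply div_nonneg _ (Nat.cast_nonneg n)
    exact Finset.sum_nonneg fun i _ => by split <;> norm_num
  · have h1 : ∑ a, flowOf v a = (∑ a, ∑ i, if v i = a then (1 : ℝ) else 0) / n := by
      rw [Finset.sum_div]; rfl
    rw [h1, Finset.sum_comm]
    have h2 : ∀ i : Fin n, (∑ a, if v i = a then (1 : ℝ) else 0) = 1 := by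
      intro i; simp
    rw [Finset.sum_congr rfl fun i _ => h2 i]
    simp
    omega

open Finset Topology

/-!
Draw a flow `y` from `μ(·|θ)`, round `n • y` to a vector of integer counts summing to `n`, and
recommend a uniformly random profile with these counts: this is `β^n`. Since `β^n` depends on a
profile only through its counts, the players are exchangeable, and the expected cost of a player
told `a` who plays `b` is an integral over `μ` of the `a`-share of the rounded flow times `c_b` at
the rounded flow in which one `a`-player switched to `b`. Both rounded flows converge to `y`, so by
dominated convergence these costs converge to the nonatomic ones, for which obedience is the BCWE
inequality; `ε_n` collects the positive parts of the violations. The same convergence yields the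
weak* convergence of the outcomes.
-/

lemma FlowSet.isCompact {A : Type*} [Fintype A] : IsCompact (FlowSet A) := by
  have hsub : FlowSet A ⊆ Set.pi Set.univ (fun _ => Set.Icc (0 : ℝ) 1) := fun y hy a _ =>
    ⟨hy.1 a, hy.2 ▸ Finset.single_le_sum (fun b _ => hy.1 b) (Finset.mem_univ a)⟩
  have hclosed : IsClosed (FlowSet A) := by
    rw [FlowSet, Set.ofPred_and, Set.ofPred_forall]
    exact (isClosed_iInter fun a => isClosed_le continuous_const (continuous_apply a)).inter
      (isClosed_eq (continuous_finsetSum _ fun a _ => continuous_apply a) continuous_const)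
  exact (isCompact_univ_pi fun _ => isCompact_Icc).of_isClosed_subset hclosed hsub

section CountsFlow
variable {A : Type*} [Fintype A]

noncomputable def countsFlow (k : A → ℕ) (a : A) : ℝ := k a / ∑ b, (k b : ℝ)

lemma countsFlow_mem {k : A → ℕ} (hk : ∑ a, k a ≠ 0) : countsFlow k ∈ FlowSet A := by
  have hk' : ∑ a, (k a : ℝ) ≠ 0 := by exact_mod_cast hk
  exact ⟨fun a => by unfold countsFlow; positivity, by simp [countsFlow, ← Finset.sum_div, hk']⟩

end CountsFlow

lemma Finset.sum_ite_eq_inv_card_fiber_mul {α γ : Type*} [Fintype α] [DecidableEq γ]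
    (f : α → γ) {b : γ} (hb : b ∈ Set.range f) (H : γ → ℝ) :
    ∑ x, (if f x = b then (#{x' | f x' = f x} : ℝ)⁻¹ else 0) * H (f x) = H b := by
  have hcard : (#{x' | f x' = b} : ℝ) ≠ 0 := by
    obtain ⟨x, rfl⟩ := hb
    exact_mod_cast (Finset.card_pos.2 ⟨x, by simp⟩).ne'
  calc _ = ∑ x with f x = b, (#{x' | f x' = b} : ℝ)⁻¹ * H b := by
        rw [Finset.sum_filter]
        refine Finset.sum_congr rfl fun x _ => ?_
        by_cases h : f x = b <;> simp [h]
    _ = H b := by rw [Finset.sum_const, nsmul_eq_mul, ← mul_assoc, mul_inv_cancel₀ hcard, one_mul]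

section Profiles
variable {A : Type*} [DecidableEq A] {n : ℕ}

def actionCounts (v : Fin n → A) (a : A) : ℕ := ∑ i, if v i = a then 1 else 0

lemma actionCounts_comp_perm (v : Fin n → A) (σ : Equiv.Perm (Fin n)) :
    actionCounts (v ∘ σ) = actionCounts v :=
  funext fun a => Equiv.sum_comp σ fun i => if v i = a then 1 else 0

variable [Fintype A]

lemma sum_actionCounts (v : Fin n → A) : ∑ a, actionCounts v a = n := by
  simp only [actionCounts]
  rw [Finset.sum_comm]
  simp

lemma countsFlow_actionCounts_apply (v : Fin n → A) (a : A) :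
    countsFlow (actionCounts v) a = actionCounts v a / n := by
  rw [countsFlow, ← Nat.cast_sum, sum_actionCounts]

lemma flowOf_eq_countsFlow (v : Fin n → A) : flowOf v = countsFlow (actionCounts v) := by
  ext a
  rw [countsFlow_actionCounts_apply]
  simp [flowOf, actionCounts]

lemma exists_actionCounts_eq {k : A → ℕ} (hk : ∑ a, k a = n) :
    ∃ v : Fin n → A, actionCounts v = k := by
  obtain ⟨e⟩ : Nonempty (Fin n ≃ Σ a, Fin (k a)) :=
    ⟨(Fintype.equivFinOfCardEq (by simp [hk])).symm⟩
  refine ⟨fun i => (e i).1, funext fun a => ?_⟩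
  rw [actionCounts, e.sum_comp (fun s => if s.1 = a then 1 else 0), Fintype.sum_sigma]
  simp [apply_ite Finset.card]

lemma sum_filter_apply_eq_sum_countsFlow_mul (i : Fin n) (a : A) (F : (A → ℕ) → ℝ) :
    ∑ v : Fin n → A with v i = a, F (actionCounts v) =
      ∑ v : Fin n → A, countsFlow (actionCounts v) a * F (actionCounts v) := by
  have hn : (n : ℝ) ≠ 0 := Nat.cast_ne_zero.2 (Fin.pos i).ne'
  -- relabelling the players by the transposition of `i` and `j` preserves the counts
  have hswap : ∀ j : Fin n, ∑ v : Fin n → A, (if v j = a then F (actionCounts v) else 0) =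
      ∑ v : Fin n → A, (if v i = a then F (actionCounts v) else 0) := fun j =>
    Fintype.sum_equiv ((Equiv.swap i j).arrowCongr (Equiv.refl A)) _ _ fun v => by
      have he : (Equiv.swap i j).arrowCongr (Equiv.refl A) v = v ∘ Equiv.swap i j := by
        ext; simp [Equiv.arrowCongr_apply]
      rw [he, actionCounts_comp_perm, Function.comp_apply, Equiv.swap_apply_left]
  have hcount : ∀ v : Fin n → A, ∑ j, (if v j = a then F (actionCounts v) else 0) =
      actionCounts v a * F (actionCounts v) := fun v => by
    simp only [actionCounts, Nat.cast_sum, Nat.cast_ite, Nat.cast_one, Nat.cast_zero,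
      Finset.sum_mul, ite_mul, one_mul, zero_mul]
  rw [Finset.sum_filter]
  simp_rw [countsFlow_actionCounts_apply, div_mul_eq_mul_div, ← Finset.sum_div, ← hcount]
  rw [Finset.sum_comm]
  simp_rw [hswap]
  rw [Finset.sum_const, Finset.card_univ, Fintype.card_fin, nsmul_eq_mul]
  field_simp

end Profiles

section Deviation
variable {A : Type*} [DecidableEq A] {n : ℕ}

def deviateCounts (a b : A) (k : A → ℕ) : A → ℕ := k - Pi.single a 1 + Pi.single b 1

lemma actionCounts_update {v : Fin n → A} {i : Fin n} {a : A} (hv : v i = a) (b : A) :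
    actionCounts (Function.update v i b) = deviateCounts a b (actionCounts v) := by
  ext c
  have hsplit : ∀ w : Fin n → A, actionCounts w c =
      (if w i = c then 1 else 0) + ∑ j ∈ univ.erase i, if w j = c then 1 else 0 :=
    fun w => (Finset.add_sum_erase _ _ (Finset.mem_univ i)).symm
  have hrest : ∑ j ∈ univ.erase i, (if Function.update v i b j = c then 1 else 0) =
      ∑ j ∈ univ.erase i, if v j = c then 1 else 0 :=
    Finset.sum_congr rfl fun j hj => by rw [Function.update_of_ne (Finset.ne_of_mem_erase hj)]
  simp only [deviateCounts, Pi.add_apply, Pi.sub_apply, Pi.single_apply]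
  rw [hsplit, hsplit v, hrest, Function.update_self, hv]
  rcases eq_or_ne c a with rfl | hca <;> rcases eq_or_ne c b with rfl | hcb <;>
    simp [*, eq_comm] <;> omega

lemma abs_deviateCounts_sub_le (a b : A) (k : A → ℕ) (c : A) :
    |(deviateCounts a b k c : ℝ) - k c| ≤ 1 := by
  have h₁ : deviateCounts a b k c ≤ k c + 1 := by
    simp only [deviateCounts, Pi.add_apply, Pi.sub_apply, Pi.single_apply]; split_ifs <;> omega
  have h₂ : k c ≤ deviateCounts a b k c + 1 := by
    simp only [deviateCounts, Pi.add_apply, Pi.sub_apply, Pi.single_apply]; split_ifs <;> omega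
  have h₁' : (deviateCounts a b k c : ℝ) ≤ k c + 1 := by exact_mod_cast h₁
  have h₂' : (k c : ℝ) ≤ deviateCounts a b k c + 1 := by exact_mod_cast h₂
  rw [abs_sub_le_iff]
  constructor <;> linarith

variable [Fintype A]

lemma sum_deviateCounts_ne_zero (a b : A) (k : A → ℕ) : ∑ c, deviateCounts a b k c ≠ 0 := by
  have hb : 1 ≤ deviateCounts a b k b := by simp [deviateCounts]
  exact Nat.one_le_iff_ne_zero.1 (hb.trans (Finset.single_le_sum (by simp) (Finset.mem_univ b)))

end Deviation

section Rounding
variable {A : Type*} [Fintype A] [DecidableEq A] [Inhabited A] {n : ℕ} {y : A → ℝ}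

noncomputable def roundCounts (n : ℕ) (y : A → ℝ) : A → ℕ :=
  Function.update (fun a => ⌊n * y a⌋₊) default (n - ∑ a ∈ univ.erase default, ⌊n * y a⌋₊)

lemma sum_roundCounts (hy : y ∈ FlowSet A) : ∑ a, roundCounts n y a = n := by
  have hle : ∑ a ∈ univ.erase default, ⌊n * y a⌋₊ ≤ n := by
    have : ∑ a ∈ univ.erase default, (⌊n * y a⌋₊ : ℝ) ≤ n := calc
      _ ≤ ∑ a ∈ univ.erase default, n * y a :=
        Finset.sum_le_sum fun a _ => Nat.floor_le (by have := hy.1 a; positivity)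
      _ ≤ ∑ a, n * y a :=
        Finset.sum_le_sum_of_subset_of_nonneg (Finset.erase_subset _ _)
          fun a _ _ => by have := hy.1 a; positivity
      _ = n := by rw [← Finset.mul_sum, hy.2, mul_one]
    exact_mod_cast this
  rw [roundCounts, Finset.sum_update_of_mem (Finset.mem_univ _), ← Finset.erase_eq]
  omega

lemma abs_roundCounts_sub_le (hy : y ∈ FlowSet A) (a : A) :
    |(roundCounts n y a : ℝ) - n * y a| ≤ Fintype.card A := by
  have hfloor : ∀ a ≠ default, |(roundCounts n y a : ℝ) - n * y a| ≤ 1 := fun a ha => by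
    have h₀ : 0 ≤ (n : ℝ) * y a := by have := hy.1 a; positivity
    rw [roundCounts, Function.update_of_ne ha, abs_sub_le_iff]
    constructor <;> linarith [Nat.floor_le h₀, Nat.lt_floor_add_one ((n : ℝ) * y a)]
  by_cases ha : a = default
  · subst ha
    -- the errors sum to zero, so the error at `default` is bounded by the others
    have hsum : ∑ b, ((roundCounts n y b : ℝ) - n * y b) = 0 := by
      rw [Finset.sum_sub_distrib, ← Nat.cast_sum, sum_roundCounts hy, ← Finset.mul_sum, hy.2,
        mul_one, sub_self]
    rw [← Finset.add_sum_erase _ _ (Finset.mem_univ default)] at hsum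
    calc _ = |∑ b ∈ univ.erase default, ((roundCounts n y b : ℝ) - n * y b)| := by
          rw [eq_neg_of_add_eq_zero_left hsum, abs_neg]
      _ ≤ ∑ b ∈ univ.erase default, |(roundCounts n y b : ℝ) - n * y b| :=
          Finset.abs_sum_le_sum_abs _ _
      _ ≤ ∑ b ∈ univ.erase (default : A), (1 : ℝ) :=
          Finset.sum_le_sum fun b hb => hfloor b (Finset.ne_of_mem_erase hb)
      _ ≤ Fintype.card A := by simp
  · exact (hfloor a ha).trans (by exact_mod_cast Fintype.card_pos)

lemma measurable_roundCounts (n : ℕ) : Measurable (roundCounts n : (A → ℝ) → A → ℕ) := by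
  have hfloor : ∀ a, Measurable fun y : A → ℝ => ⌊n * y a⌋₊ := fun a =>
    Nat.measurable_floor.comp (measurable_const.mul (measurable_pi_apply a))
  refine measurable_pi_lambda _ fun a => ?_
  by_cases ha : a = default
  · subst ha
    simp only [roundCounts, Function.update_self]
    exact measurable_const.sub (Finset.measurable_sum _ fun b _ => hfloor b)
  · simpa [roundCounts, Function.update_of_ne ha] using hfloor a

end Rounding

lemma tendsto_div_natCast_of_abs_sub_le {x : ℕ → ℝ} {t C : ℝ} (h : ∀ n, |x n - n * t| ≤ C) :
    Tendsto (fun n => x n / n) atTop (𝓝 t) := by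
  have herr : Tendsto (fun n : ℕ => (x n - n * t) / n) atTop (𝓝 0) :=
    squeeze_zero_norm (fun n => by
      rw [norm_div, Real.norm_eq_abs, RCLike.norm_natCast]
      exact div_le_div_of_nonneg_right (h n) n.cast_nonneg)
      (tendsto_const_div_atTop_nhds_zero_nat C)
  refine (by simpa using herr.add_const t : Tendsto _ atTop (𝓝 t)).congr' ?_
  filter_upwards [eventually_ne_atTop 0] with n hn
  field_simp
  ring

section Convergence
variable {A : Type*} [Fintype A]

lemma tendsto_countsFlow {k : ℕ → A → ℕ} {y : A → ℝ} (hy : y ∈ FlowSet A)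
    (h : ∀ a, Tendsto (fun n => (k n a : ℝ) / n) atTop (𝓝 (y a))) :
    Tendsto (fun n => countsFlow (k n)) atTop (𝓝 y) := by
  have htotal : Tendsto (fun n => ∑ b, (k n b : ℝ) / n) atTop (𝓝 1) :=
    hy.2 ▸ tendsto_finsetSum _ fun b _ => h b
  refine tendsto_pi_nhds.2 fun a => ?_
  refine (by simpa using (h a).div htotal one_ne_zero : Tendsto _ atTop (𝓝 (y a))).congr' ?_
  filter_upwards [eventually_ne_atTop 0] with n hn
  rw [Pi.div_apply, countsFlow, ← Finset.sum_div, div_div_div_cancel_right₀ (Nat.cast_ne_zero.2 hn)]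

variable [DecidableEq A] [Inhabited A] {y : A → ℝ}

lemma tendsto_countsFlow_roundCounts (hy : y ∈ FlowSet A) :
    Tendsto (fun n => countsFlow (roundCounts n y)) atTop (𝓝 y) :=
  tendsto_countsFlow hy fun a =>
    tendsto_div_natCast_of_abs_sub_le fun _ => abs_roundCounts_sub_le hy a

lemma tendsto_countsFlow_deviateCounts_roundCounts (hy : y ∈ FlowSet A) (a b : A) :
    Tendsto (fun n => countsFlow (deviateCounts a b (roundCounts n y))) atTop (𝓝 y) :=
  tendsto_countsFlow hy fun c => tendsto_div_natCast_of_abs_sub_le fun n =>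
    (abs_sub_le _ (roundCounts n y c : ℝ) _).trans
      (add_le_add (abs_deviateCounts_sub_le a b _ c) (abs_roundCounts_sub_le hy c))

end Convergence

lemma tendsto_integral_comp_of_continuousOn {X E : Type*} [MeasurableSpace X]
    [TopologicalSpace E] {μ : Measure X} [IsFiniteMeasure μ] {S : Set E} (hS : IsCompact S)
    {g : E → ℝ} (hg : ContinuousOn g S) {ψ : ℕ → X → E} {φ : X → E}
    (hmeas : ∀ n, AEStronglyMeasurable (fun x => g (ψ n x)) μ)
    (hψS : ∀ᶠ n in atTop, ∀ x, ψ n x ∈ S) (hφS : ∀ x, φ x ∈ S)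
    (hlim : ∀ x, Tendsto (fun n => ψ n x) atTop (𝓝 (φ x))) :
    Tendsto (fun n => ∫ x, g (ψ n x) ∂μ) atTop (𝓝 (∫ x, g (φ x) ∂μ)) := by
  obtain ⟨C, hC⟩ := hS.exists_bound_of_continuousOn hg
  refine tendsto_integral_filter_of_dominated_convergence (fun _ => C)
    (Eventually.of_forall hmeas) ?_ (integrable_const C) (ae_of_all _ fun x => ?_)
  · filter_upwards [hψS] with n hn using ae_of_all _ fun x => hC _ (hn x)
  · exact (hg _ (hφS x)).tendsto.comp
      (tendsto_nhdsWithin_iff.2 ⟨hlim x, hψS.mono fun n hn => hn x⟩)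

section RoundingWeight
variable {A : Type*} [Fintype A] [DecidableEq A] [Inhabited A] (μ : Measure (FlowSet A))

lemma aestronglyMeasurable_comp_roundCounts (n : ℕ) (Φ : (A → ℕ) → ℝ) :
    AEStronglyMeasurable (fun y : FlowSet A => Φ (roundCounts n y)) μ :=
  ((measurable_of_countable Φ).comp
    ((measurable_roundCounts n).comp measurable_subtype_coe)).aestronglyMeasurable

lemma integrable_comp_roundCounts [IsFiniteMeasure μ] (n : ℕ) (Φ : (A → ℕ) → ℝ) :
    Integrable (fun y : FlowSet A => Φ (roundCounts n y)) μ := by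
  let K := Fintype.piFinset fun _ : A => range (n + 1)
  refine .of_bound (aestronglyMeasurable_comp_roundCounts μ n Φ) (∑ k ∈ K, |Φ k|)
    (ae_of_all _ fun y => ?_)
  have hmem : roundCounts n y ∈ K := Fintype.mem_piFinset.2 fun a => Finset.mem_range_succ_iff.2
    ((Finset.single_le_sum (fun _ _ => Nat.zero_le _) (Finset.mem_univ a)).trans
      (sum_roundCounts y.2).le)
  exact Finset.single_le_sum (f := fun k => |Φ k|) (fun _ _ => abs_nonneg _) hmem

-- the uniform distribution on the profiles whose counts are `roundCounts n y`, averaged over `y`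
noncomputable def roundingWeight (n : ℕ) (k : A → ℕ) : ℝ :=
  ∫ y, if k = roundCounts n y then (#{v : Fin n → A | actionCounts v = k} : ℝ)⁻¹ else 0 ∂μ

lemma roundingWeight_nonneg (n : ℕ) (k : A → ℕ) : 0 ≤ roundingWeight μ n k :=
  integral_nonneg fun y => by dsimp only; split_ifs <;> positivity

variable [IsFiniteMeasure μ] {n : ℕ}

lemma sum_roundingWeight_mul (H : (A → ℕ) → ℝ) :
    ∑ v : Fin n → A, roundingWeight μ n (actionCounts v) * H (actionCounts v) =
      ∫ y, H (roundCounts n y) ∂μ := by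
  simp_rw [roundingWeight, ← integral_mul_const]
  rw [← integral_finsetSum _ fun v _ => integrable_comp_roundCounts μ n fun k =>
    (if actionCounts v = k then (#{w : Fin n → A | actionCounts w = actionCounts v} : ℝ)⁻¹
      else 0) * H (actionCounts v)]
  exact integral_congr_ae (ae_of_all _ fun y => Finset.sum_ite_eq_inv_card_fiber_mul actionCounts
    (exists_actionCounts_eq (sum_roundCounts y.2)) H)

lemma sum_roundingWeight [IsProbabilityMeasure μ] :
    ∑ v : Fin n → A, roundingWeight μ n (actionCounts v) = 1 := by
  simpa using sum_roundingWeight_mul (n := n) μ fun _ => 1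

lemma sum_filter_roundingWeight_mul_eq_integral (i : Fin n) (a b : A) (g : (A → ℝ) → ℝ) :
    ∑ v : Fin n → A with v i = a,
        roundingWeight μ n (actionCounts v) * g (flowOf (Function.update v i b)) =
      ∫ y, countsFlow (roundCounts n y) a *
        g (countsFlow (deviateCounts a b (roundCounts n y))) ∂μ := by
  let F k := roundingWeight μ n k * g (countsFlow (deviateCounts a b k))
  calc _ = ∑ v : Fin n → A with v i = a, F (actionCounts v) :=
        Finset.sum_congr rfl fun v hv => by
          rw [flowOf_eq_countsFlow, actionCounts_update (Finset.mem_filter.1 hv).2]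
    _ = ∑ v : Fin n → A, roundingWeight μ n (actionCounts v) * (countsFlow (actionCounts v) a *
          g (countsFlow (deviateCounts a b (actionCounts v)))) := by
        rw [sum_filter_apply_eq_sum_countsFlow_mul]
        exact Finset.sum_congr rfl fun v _ => by ring
    _ = _ := sum_roundingWeight_mul μ fun k => countsFlow k a * g (countsFlow (deviateCounts a b k))

end RoundingWeight

lemma integral_finset_sum_ofReal_smul_dirac {X ι : Type*} [MeasurableSpace X]
    [MeasurableSingletonClass X] [Fintype ι] {w : ι → ℝ} (hw : ∀ i, 0 ≤ w i) (x : ι → X)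
    (f : X → ℝ) :
    ∫ z, f z ∂(∑ i, ENNReal.ofReal (w i) • Measure.dirac (x i)) = ∑ i, w i * f (x i) := by
  rw [integral_finsetSum_measure fun i _ =>
    (integrable_dirac (by simp)).smul_measure ENNReal.ofReal_ne_top]
  simp [integral_smul_measure, integral_dirac, hw]

section Outcome
variable {A : Type*} [Fintype A] [DecidableEq A] [Inhabited A] (μ : Measure (FlowSet A))

noncomputable def roundedOutcome (n : ℕ) : Measure (FlowSet A) :=
  if hn : 0 < n then
    ∑ v : Fin n → A, ENNReal.ofReal (roundingWeight μ n (actionCounts v)) •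
      Measure.dirac ⟨flowOf v, flowOf_mem hn v⟩
  else 0

lemma tendsto_integral_roundedOutcome [IsFiniteMeasure μ] (f : C(FlowSet A, ℝ)) :
    Tendsto (fun n => ∫ y, f y ∂roundedOutcome μ n) atTop (𝓝 (∫ y, f y ∂μ)) := by
  let g : (A → ℝ) → ℝ := Function.extend Subtype.val f 0
  have hg : ∀ y : FlowSet A, g y = f y := Subtype.val_injective.extend_apply f 0
  have hgc : ContinuousOn g (FlowSet A) :=
    continuousOn_iff_continuous_domRestrict.2 (by convert f.continuous using 1; exact funext hg)
  have houtcome : ∀ n, 0 < n →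
      ∫ y, f y ∂roundedOutcome μ n = ∫ y, g (countsFlow (roundCounts n y)) ∂μ := fun n hn => by
    rw [roundedOutcome, dif_pos hn,
      integral_finset_sum_ofReal_smul_dirac (fun v => roundingWeight_nonneg μ n _)]
    simp_rw [← hg, flowOf_eq_countsFlow]
    exact sum_roundingWeight_mul μ fun k => g (countsFlow k)
  simp_rw [← hg] at houtcome ⊢
  refine (tendsto_integral_comp_of_continuousOn FlowSet.isCompact hgc
    (fun n => aestronglyMeasurable_comp_roundCounts μ n fun k => g (countsFlow k)) ?_
    (fun y => y.2) (fun y => tendsto_countsFlow_roundCounts y.2)).congr' ?_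
  · filter_upwards [eventually_gt_atTop 0] with n hn y
      using countsFlow_mem (sum_roundCounts y.2 ▸ hn.ne')
  · filter_upwards [eventually_gt_atTop 0] with n hn using (houtcome n hn).symm

end Outcome

section IncentiveGap
variable {A Θ : Type*} [Fintype A] [DecidableEq A] [Inhabited A] [Fintype Θ]
  (p : Θ → ℝ) (c : A → (A → ℝ) → Θ → ℝ) (μ : Θ → Measure (FlowSet A))

-- expected cost of a player who is recommended `a` and plays `b`; for `b = a`, of obeying
noncomputable def deviationCost (n : ℕ) (a b : A) : ℝ :=
  ∑ θ, p θ * ∫ y, countsFlow (roundCounts n y) a *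
    c b (countsFlow (deviateCounts a b (roundCounts n y))) θ ∂μ θ

noncomputable def incentiveGap (n : ℕ) : ℝ :=
  ∑ q : A × A, max 0 (deviationCost p c μ n q.1 q.1 - deviationCost p c μ n q.1 q.2)

lemma incentiveGap_nonneg (n : ℕ) : 0 ≤ incentiveGap p c μ n :=
  Finset.sum_nonneg fun _ _ => le_max_left _ _

lemma deviationCost_self_le (n : ℕ) (a b : A) :
    deviationCost p c μ n a a ≤ deviationCost p c μ n a b + incentiveGap p c μ n := by
  have := (le_max_right 0 _).trans (Finset.single_le_sum
    (f := fun q : A × A => max 0 (deviationCost p c μ n q.1 q.1 - deviationCost p c μ n q.1 q.2))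
    (fun _ _ => le_max_left _ _) (Finset.mem_univ (a, b)))
  rw [incentiveGap]
  linarith

variable [∀ θ, IsFiniteMeasure (μ θ)] {n : ℕ}

lemma sum_filter_eq_deviationCost (i : Fin n) (a b : A) :
    ∑ θ, ∑ v : Fin n → A with v i = a,
        p θ * roundingWeight (μ θ) n (actionCounts v) * c b (flowOf (Function.update v i b)) θ =
      deviationCost p c μ n a b :=
  Finset.sum_congr rfl fun θ _ => by
    rw [← sum_filter_roundingWeight_mul_eq_integral (μ θ) i a b fun y => c b y θ, Finset.mul_sum]
    exact Finset.sum_congr rfl fun v _ => mul_assoc _ _ _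

lemma sum_filter_eq_deviationCost_self (i : Fin n) (a : A) :
    ∑ θ, ∑ v : Fin n → A with v i = a,
        p θ * roundingWeight (μ θ) n (actionCounts v) * c a (flowOf v) θ =
      deviationCost p c μ n a a := by
  rw [← sum_filter_eq_deviationCost p c μ i a a]
  refine Finset.sum_congr rfl fun θ _ => Finset.sum_congr rfl fun v hv => ?_
  rw [← (Finset.mem_filter.1 hv).2, Function.update_eq_self]

lemma tendsto_deviationCost (hc : ∀ a θ, ContinuousOn (fun y => c a y θ) (FlowSet A))
    (a b : A) :
    Tendsto (fun n => deviationCost p c μ n a b) atTop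
      (𝓝 (∑ θ, p θ * ∫ y : FlowSet A, (y : A → ℝ) a * c b y θ ∂μ θ)) := by
  refine tendsto_finsetSum _ fun θ _ => .const_mul (p θ) ?_
  have hg : ContinuousOn (fun z : (A → ℝ) × (A → ℝ) => z.1 a * c b z.2 θ)
      (FlowSet A ×ˢ FlowSet A) :=
    ((continuous_apply a).comp continuous_fst).continuousOn.mul
      ((hc b θ).comp continuous_snd.continuousOn fun _ hz => hz.2)
  refine tendsto_integral_comp_of_continuousOn
    (ψ := fun n (y : FlowSet A) =>
      (countsFlow (roundCounts n y), countsFlow (deviateCounts a b (roundCounts n y))))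
    (φ := fun y => ((y : A → ℝ), (y : A → ℝ)))
    (FlowSet.isCompact.prod FlowSet.isCompact) hg
    (fun n => aestronglyMeasurable_comp_roundCounts (μ θ) n fun k =>
      countsFlow k a * c b (countsFlow (deviateCounts a b k)) θ) ?_ (fun y => ⟨y.2, y.2⟩)
    (fun y => (tendsto_countsFlow_roundCounts y.2).prodMk_nhds
      (tendsto_countsFlow_deviateCounts_roundCounts y.2 a b))
  filter_upwards [eventually_gt_atTop 0] with n hn y
  exact ⟨countsFlow_mem (sum_roundCounts y.2 ▸ hn.ne'),
    countsFlow_mem (sum_deviateCounts_ne_zero a b _)⟩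

lemma tendsto_incentiveGap (hc : ∀ a θ, ContinuousOn (fun y => c a y θ) (FlowSet A))
    (hBCWE : ∀ a b : A,
      ∑ θ, p θ * ∫ y : FlowSet A, (y : A → ℝ) a * c a y θ ∂μ θ ≤
      ∑ θ, p θ * ∫ y : FlowSet A, (y : A → ℝ) a * c b y θ ∂μ θ) :
    Tendsto (incentiveGap p c μ) atTop (𝓝 0) := by
  have := tendsto_finsetSum (Finset.univ : Finset (A × A)) fun q _ =>
    tendsto_const_nhds (x := (0 : ℝ)).max
      ((tendsto_deviationCost p c μ hc q.1 q.1).sub (tendsto_deviationCost p c μ hc q.1 q.2))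
  simp only [max_eq_left (sub_nonpos.2 (hBCWE _ _)), Finset.sum_const_zero] at this
  exact this

end IncentiveGap

theorem stmt15_general {A Θ : Type*} [Fintype A] [Nonempty A] [DecidableEq A]
    [Fintype Θ]
    (p : Θ → ℝ)
    (c : A → (A → ℝ) → Θ → ℝ)
    (hc : ∀ a θ, ContinuousOn (fun y => c a y θ) (FlowSet A))
    -- μ is a Bayes correlated Wardrop equilibrium of Γ
    (μ : Θ → Measure ↥(FlowSet A)) (hprob : ∀ θ, IsProbabilityMeasure (μ θ))
    (hBCWE : ∀ a b : A,
      ∑ θ, p θ * ∫ y : ↥(FlowSet A), (y : A → ℝ) a * c a (y : A → ℝ) θ ∂(μ θ) ≤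
      ∑ θ, p θ * ∫ y : ↥(FlowSet A), (y : A → ℝ) a * c b (y : A → ℝ) θ ∂(μ θ)) :
    ∃ (ε : ℕ → ℝ) (β : ∀ n : ℕ, Θ → (Fin n → A) → ℝ)
      (ν : ℕ → Θ → Measure ↥(FlowSet A)),
      (∀ n, 0 ≤ ε n) ∧ Tendsto ε atTop (nhds 0) ∧
      (∀ n (hn : 0 < n),
        -- β n is a probability distribution over action profiles in each state
        (∀ θ v, 0 ≤ β n θ v) ∧ (∀ θ, ∑ v, β n θ v = 1) ∧
        -- β n is an (ε n)-Bayes correlated equilibrium of Γ_n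
        (∀ (i : Fin n) (a b : A),
          (∑ θ, ∑ v ∈ Finset.univ.filter (fun v : Fin n → A => v i = a),
            p θ * β n θ v * c a (flowOf v) θ) ≤
          (∑ θ, ∑ v ∈ Finset.univ.filter (fun v : Fin n → A => v i = a),
            p θ * β n θ v * c b (flowOf (Function.update v i b)) θ) + ε n) ∧
        -- ν n is the induced outcome
        (∀ θ, ν n θ =
          ∑ v : Fin n → A, (ENNReal.ofReal (β n θ v)) •
            Measure.dirac (⟨flowOf v, flowOf_mem hn v⟩ : ↥(FlowSet A)))) ∧
      -- weak* convergence of the outcomes to μ, state by state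
      (∀ (θ : Θ) (f : C(↥(FlowSet A), ℝ)),
        Tendsto (fun n => ∫ y, f y ∂(ν n θ)) atTop (nhds (∫ y, f y ∂(μ θ)))) := by
  inhabit A
  refine ⟨incentiveGap p c μ, fun n θ v => roundingWeight (μ θ) n (actionCounts v),
    fun n θ => roundedOutcome (μ θ) n, incentiveGap_nonneg p c μ,
    tendsto_incentiveGap p c μ hc hBCWE, fun n hn => ⟨fun θ v => roundingWeight_nonneg _ n _,
    fun θ => sum_roundingWeight (μ θ), fun i a b => ?_, fun θ => dif_pos hn⟩,
    fun θ => tendsto_integral_roundedOutcome (μ θ)⟩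
  rw [sum_filter_eq_deviationCost_self p c μ i a, sum_filter_eq_deviationCost p c μ i a b]
  exact deviationCost_self_le p c μ n a b

/-- Every Bayes correlated Wardrop equilibrium `μ` of the nonatomic
game `Γ` is the weak* limit of outcomes of `ε_n`-Bayes correlated equilibria of the
`n`-player games `Γ_n`, with `ε_n → 0`. -/
theorem stmt15 {A Θ : Type*} [Fintype A] [Nonempty A] [DecidableEq A]
    [Fintype Θ] [Nonempty Θ]
    (p : Θ → ℝ) (hp : ∀ θ, 0 < p θ) (hp1 : ∑ θ, p θ = 1)
    (c : A → (A → ℝ) → Θ → ℝ)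
    (hc : ∀ a θ, ContinuousOn (fun y => c a y θ) (FlowSet A))
    -- μ is a Bayes correlated Wardrop equilibrium of Γ
    (μ : Θ → Measure ↥(FlowSet A)) (hprob : ∀ θ, IsProbabilityMeasure (μ θ))
    (hBCWE : ∀ a b : A,
      ∑ θ, p θ * ∫ y : ↥(FlowSet A), (y : A → ℝ) a * c a (y : A → ℝ) θ ∂(μ θ) ≤
      ∑ θ, p θ * ∫ y : ↥(FlowSet A), (y : A → ℝ) a * c b (y : A → ℝ) θ ∂(μ θ)) :
    ∃ (ε : ℕ → ℝ) (β : ∀ n : ℕ, Θ → (Fin n → A) → ℝ)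
      (ν : ℕ → Θ → Measure ↥(FlowSet A)),
      (∀ n, 0 ≤ ε n) ∧ Tendsto ε atTop (nhds 0) ∧
      (∀ n (hn : 0 < n),
        -- β n is a probability distribution over action profiles in each state
        (∀ θ v, 0 ≤ β n θ v) ∧ (∀ θ, ∑ v, β n θ v = 1) ∧
        -- β n is an (ε n)-Bayes correlated equilibrium of Γ_n
        (∀ (i : Fin n) (a b : A),
          (∑ θ, ∑ v ∈ Finset.univ.filter (fun v : Fin n → A => v i = a),
            p θ * β n θ v * c a (flowOf v) θ) ≤
          (∑ θ, ∑ v ∈ Finset.univ.filter (fun v : Fin n → A => v i = a),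
            p θ * β n θ v * c b (flowOf (Function.update v i b)) θ) + ε n) ∧
        -- ν n is the induced outcome
        (∀ θ, ν n θ =
          ∑ v : Fin n → A, (ENNReal.ofReal (β n θ v)) •
            Measure.dirac (⟨flowOf v, flowOf_mem hn v⟩ : ↥(FlowSet A)))) ∧
      -- weak* convergence of the outcomes to μ, state by state
      (∀ (θ : Θ) (f : C(↥(FlowSet A), ℝ)),
        Tendsto (fun n => ∫ y, f y ∂(ν n θ)) atTop (nhds (∫ y, f y ∂(μ θ)))) :=
  stmt15_general p c hc μ hprob hBCWE
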